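/- arXiv:1605.00138 — 8 statements merged into one kernel-verified Lean document; each statement's English description precedes it below -/
import Mathlib

section
/- Let n ≥ 1. The restriction map from conjugation-invariant polynomial functions on Matₙ(ℂ) to polynomial functions on the space of companion matrices is an isomorphism. Precisely: (1) if p is a conjugation-invariant polynomial function on Matₙ(ℂ) that vanishes on every companion matrix, then p = 0; (2) for every polynomial q ∈ ℂ[y₁,…,yₙ] there exists a conjugation-invariant polynomial function p on Matₙ(ℂ) such that p(C(a₁,…,aₙ)) = q(a₁,…,aₙ) for all (a₁,…,aₙ) ∈ ℂⁿ, where C(a₁,…,aₙ) denotes the companion matrix with subdiagonal entries 1, last column (−a₁,…,−aₙ)ᵀ, and all other entries 0. -/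
open Matrix

/-- Evaluation of a polynomial in the `n²` matrix entries at a matrix `A`:
a polynomial function on `Matₙ(ℂ)`. -/
noncomputable def evalMat {n : ℕ} (P : MvPolynomial (Fin n × Fin n) ℂ)
    (A : Matrix (Fin n) (Fin n) ℂ) : ℂ :=
  MvPolynomial.eval (fun q => A q.1 q.2) P

/-- A companion matrix: subdiagonal entries equal 1, the last column is arbitrary,
and all other entries are 0. -/
def IsCompanion {n : ℕ} (M : Matrix (Fin n) (Fin n) ℂ) : Prop :=
  ∀ i j : Fin n, (j : ℕ) + 1 < n →
    (((i : ℕ) = (j : ℕ) + 1 → M i j = 1) ∧ ((i : ℕ) ≠ (j : ℕ) + 1 → M i j = 0))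

/-- The companion matrix `C(a₁,…,aₙ)` with subdiagonal entries `1`,
last column `(-a₁,…,-aₙ)ᵀ` and all other entries `0`. -/
def companionOf {n : ℕ} (a : Fin n → ℂ) : Matrix (Fin n) (Fin n) ℂ :=
  Matrix.of fun i j =>
    if (j : ℕ) + 1 = n then -a i else if (i : ℕ) = (j : ℕ) + 1 then 1 else 0

/-!
Surjectivity: `q(c₀(A), …, c_{n-1}(A))`, with `cᵢ` the coefficients of the characteristic
polynomial, is conjugation-invariant, and `charpoly (C(a)) = Xⁿ + ∑ aᵢ Xⁱ`.

Injectivity: if the Krylov matrix `K = [e₀, A e₀, …, A^{n-1} e₀]` of `A` is invertible, then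
`K⁻¹ A K` is a companion matrix. So an invariant `P` vanishing on companion matrices vanishes off
the zero set of the polynomial `det K`, which is nonzero since `K = 1` for a companion matrix.
Hence `P · det K = 0`, and `P = 0`.
-/

open MvPolynomial

theorem MvPolynomial.eq_zero_of_eval_eq_zero_of_eval_ne_zero {σ R : Type*} [CommRing R]
    [IsDomain R] [Infinite R] {P D : MvPolynomial σ R} (hD : D ≠ 0)
    (h : ∀ x, eval x D ≠ 0 → eval x P = 0) : P = 0 := by
  have hPD : P * D = 0 := funext fun x => by
    by_cases hx : eval x D = 0 <;> simp [hx, h]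
  exact (mul_eq_zero.1 hPD).resolve_right hD

section Krylov

variable {R : Type*} [Semiring R] {n : ℕ}

def krylov (A : Matrix (Fin n) (Fin n) R) (j : Fin n) : Matrix (Fin n) (Fin n) R :=
  Matrix.of fun i k => (A ^ (k : ℕ)) i j

theorem krylov_map {S : Type*} [Semiring S] (f : R →+* S) (A : Matrix (Fin n) (Fin n) R)
    (j : Fin n) : (krylov A j).map f = krylov (A.map f) j := by
  ext i k
  simp only [krylov, map_apply, of_apply, ← RingHom.mapMatrix_apply, ← map_pow]
  rfl

theorem mul_krylov_apply (A : Matrix (Fin n) (Fin n) R) (j i k : Fin n) (hk : (k : ℕ) + 1 < n) :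
    (A * krylov A j) i k = krylov A j i ⟨k + 1, hk⟩ := by
  simp only [krylov, of_apply, pow_succ', mul_apply]

end Krylov

theorem eval_det_krylov_mvPolynomialX {R : Type*} [CommRing R] {n : ℕ}
    (A : Matrix (Fin n) (Fin n) R) (j : Fin n) :
    eval (fun p => A p.1 p.2) (krylov (mvPolynomialX (Fin n) (Fin n) R) j).det =
      (krylov A j).det := by
  rw [RingHom.map_det, RingHom.mapMatrix_apply, krylov_map, ← RingHom.mapMatrix_apply,
    mvPolynomialX_mapMatrix_eval]

theorem isCompanion_inv_krylov_mul_mul_krylov {n : ℕ} (A : Matrix (Fin n) (Fin n) ℂ)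
    (j : Fin n) (hA : IsUnit (krylov A j).det) :
    IsCompanion ((krylov A j)⁻¹ * A * krylov A j) := by
  intro i k hk
  have hcol : ((krylov A j)⁻¹ * A * krylov A j) i k =
      (1 : Matrix (Fin n) (Fin n) ℂ) i ⟨k + 1, hk⟩ := by
    simp only [Matrix.mul_assoc, mul_apply (M := (krylov A j)⁻¹), mul_krylov_apply A j _ k hk]
    rw [← mul_apply, nonsing_inv_mul _ hA]
  rw [hcol, one_apply]
  exact ⟨fun h => if_pos (Fin.ext h), fun h => if_neg fun h' => h (congrArg Fin.val h')⟩

theorem exists_units_conj_isCompanion_of_isUnit_det_krylov {n : ℕ}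
    (A : Matrix (Fin n) (Fin n) ℂ) (j : Fin n) (hA : IsUnit (krylov A j).det) :
    ∃ (u : (Matrix (Fin n) (Fin n) ℂ)ˣ) (C : Matrix (Fin n) (Fin n) ℂ), IsCompanion C ∧
      A = (u : Matrix (Fin n) (Fin n) ℂ) * C * (u⁻¹ : (Matrix (Fin n) (Fin n) ℂ)ˣ) := by
  set K := krylov A j
  have hK : IsUnit K := (isUnit_iff_isUnit_det K).2 hA
  refine ⟨hK.unit, K⁻¹ * A * K, isCompanion_inv_krylov_mul_mul_krylov A j hA, ?_⟩
  rw [coe_units_inv, hK.unit_spec, Matrix.mul_assoc, Matrix.mul_assoc, mul_nonsing_inv K hA,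
    Matrix.mul_one, ← Matrix.mul_assoc, mul_nonsing_inv K hA, Matrix.one_mul]

section Companion

variable {n : ℕ} [NeZero n] (a : Fin n → ℂ)

theorem companionOf_pow_apply_zero {k : ℕ} (hk : k < n) (i : Fin n) :
    (companionOf a ^ k) i 0 = if (i : ℕ) = k then 1 else 0 := by
  induction k generalizing i with
  | zero =>
    simp_rw [pow_zero, one_apply, ← Fin.val_eq_zero_iff]
  | succ k ih =>
    have hk' : k < n := by omega
    rw [pow_succ', mul_apply, Finset.sum_eq_single ⟨k, hk'⟩]
    · rw [ih hk', if_pos rfl, mul_one]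
      simp [companionOf, hk.ne]
    · intro l _ hl
      simp [ih hk', Fin.ext_iff.not.mp hl]
    · simp

theorem companionOf_pow_dim_apply_zero (i : Fin n) : (companionOf a ^ n) i 0 = -a i := by
  obtain ⟨m, hm⟩ : ∃ m, n = m + 1 := Nat.exists_eq_succ_of_ne_zero (NeZero.ne n)
  have hpow : companionOf a ^ n = companionOf a * companionOf a ^ m := by
    rw [← pow_succ']
    exact congrArg _ hm
  rw [hpow, mul_apply, Finset.sum_eq_single ⟨m, by omega⟩]
  · rw [companionOf_pow_apply_zero a (show m < n by omega), if_pos rfl, mul_one]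
    simp [companionOf, hm]
  · intro l _ hl
    simp [companionOf_pow_apply_zero a (show m < n by omega), Fin.ext_iff.not.mp hl]
  · simp

theorem krylov_companionOf_zero : krylov (companionOf a) 0 = 1 := by
  ext i k
  simp [krylov, companionOf_pow_apply_zero a k.isLt, one_apply, Fin.ext_iff]

end Companion

theorem charpoly_companionOf_coeff {n : ℕ} (a : Fin n → ℂ) (i : Fin n) :
    (companionOf a).charpoly.coeff i = a i := by
  have : NeZero n := ⟨i.pos.ne'⟩
  have hlead : (companionOf a).charpoly.coeff n = 1 := by
    simpa [charpoly_natDegree_eq_dim] using (charpoly_monic (companionOf a)).coeff_natDegree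
  -- Cayley–Hamilton applied to `e₀`, whose iterates under `C(a)` are `e₀, …, e_{n-1}, -a`.
  have hCH := congrFun (congrFun (aeval_self_charpoly (companionOf a)) i) 0
  rw [Polynomial.aeval_eq_sum_range, charpoly_natDegree_eq_dim, Fintype.card_fin,
    Finset.sum_range_succ] at hCH
  simp only [Matrix.add_apply, Matrix.sum_apply, Matrix.smul_apply, smul_eq_mul,
    Matrix.zero_apply, hlead, companionOf_pow_dim_apply_zero] at hCH
  rw [Finset.sum_congr rfl fun k hk => by
    rw [companionOf_pow_apply_zero a (Finset.mem_range.1 hk)]] at hCH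
  simp only [mul_ite, mul_one, mul_zero, Finset.sum_ite_eq, Finset.mem_range, i.isLt,
    if_true] at hCH
  linear_combination hCH

noncomputable def ofCharpolyCoeffs {n : ℕ} (q : MvPolynomial (Fin n) ℂ) :
    MvPolynomial (Fin n × Fin n) ℂ :=
  bind₁ (fun i : Fin n => (charpoly.univ ℂ (Fin n)).coeff i) q

theorem evalMat_ofCharpolyCoeffs {n : ℕ} (q : MvPolynomial (Fin n) ℂ)
    (A : Matrix (Fin n) (Fin n) ℂ) :
    evalMat (ofCharpolyCoeffs q) A = eval (fun i : Fin n => A.charpoly.coeff i) q := by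
  rw [evalMat, ofCharpolyCoeffs, eval, eval₂Hom_bind₁]
  simp only [charpoly.univ_coeff_eval₂Hom]
  rfl

theorem evalMat_eq_zero_of_conj_invariant_of_isCompanion {n : ℕ}
    (P : MvPolynomial (Fin n × Fin n) ℂ)
    (hP : ∀ (g : (Matrix (Fin n) (Fin n) ℂ)ˣ) (A : Matrix (Fin n) (Fin n) ℂ),
      evalMat P ((g : Matrix (Fin n) (Fin n) ℂ) * A * (g⁻¹ : (Matrix (Fin n) (Fin n) ℂ)ˣ)) =
        evalMat P A)
    (hC : ∀ C : Matrix (Fin n) (Fin n) ℂ, IsCompanion C → evalMat P C = 0)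
    (A : Matrix (Fin n) (Fin n) ℂ) : evalMat P A = 0 := by
  rcases n.eq_zero_or_pos with rfl | hn
  · exact hC A fun i => i.elim0
  have : NeZero n := NeZero.of_pos hn
  set D := (krylov (mvPolynomialX (Fin n) (Fin n) ℂ) 0).det
  have hD : D ≠ 0 := fun h => by
    simpa [D, eval_det_krylov_mvPolynomialX, krylov_companionOf_zero] using
      congrArg (eval fun p => companionOf 0 p.1 p.2) h
  have hP0 : P = 0 := eq_zero_of_eval_eq_zero_of_eval_ne_zero hD fun x hx => by
    obtain ⟨u, C, hCcomp, hconj⟩ := exists_units_conj_isCompanion_of_isUnit_det_krylov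
      (Matrix.of fun i j => x (i, j)) 0
      (isUnit_iff_ne_zero.2 (by rwa [← eval_det_krylov_mvPolynomialX]))
    change evalMat P (Matrix.of fun i j => x (i, j)) = 0
    rw [hconj, hP, hC C hCcomp]
  simp [hP0, evalMat]

theorem invariant_polynomials_restrict_iso_companion_general (n : ℕ) :
    (∀ P : MvPolynomial (Fin n × Fin n) ℂ,
      (∀ (g : (Matrix (Fin n) (Fin n) ℂ)ˣ) (A : Matrix (Fin n) (Fin n) ℂ),
        evalMat P ((g : Matrix (Fin n) (Fin n) ℂ) * A *
          ((g⁻¹ : (Matrix (Fin n) (Fin n) ℂ)ˣ) : Matrix (Fin n) (Fin n) ℂ)) = evalMat P A) →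
      (∀ C : Matrix (Fin n) (Fin n) ℂ, IsCompanion C → evalMat P C = 0) →
      ∀ A : Matrix (Fin n) (Fin n) ℂ, evalMat P A = 0) ∧
    (∀ q : MvPolynomial (Fin n) ℂ,
      ∃ P : MvPolynomial (Fin n × Fin n) ℂ,
        (∀ (g : (Matrix (Fin n) (Fin n) ℂ)ˣ) (A : Matrix (Fin n) (Fin n) ℂ),
          evalMat P ((g : Matrix (Fin n) (Fin n) ℂ) * A *
            ((g⁻¹ : (Matrix (Fin n) (Fin n) ℂ)ˣ) : Matrix (Fin n) (Fin n) ℂ)) = evalMat P A) ∧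
        ∀ a : Fin n → ℂ, evalMat P (companionOf a) = MvPolynomial.eval a q) := by
  refine ⟨evalMat_eq_zero_of_conj_invariant_of_isCompanion,
    fun q => ⟨ofCharpolyCoeffs q, fun g A => ?_, fun a => ?_⟩⟩
  · simp only [evalMat_ofCharpolyCoeffs, coe_units_inv, charpoly_units_conj]
  · simp only [evalMat_ofCharpolyCoeffs, charpoly_companionOf_coeff]

/-- The restriction map from conjugation-invariant polynomial functions on `Matₙ(ℂ)`
to polynomial functions on the space of companion matrices is an isomorphism:
(1) injectivity: an invariant polynomial function vanishing on all companion matrices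
is identically zero; (2) surjectivity: every polynomial `q` in the coefficients
`(a₁,…,aₙ)` arises as the restriction of a conjugation-invariant polynomial function. -/
theorem invariant_polynomials_restrict_iso_companion (n : ℕ) (hn : 1 ≤ n) :
    (∀ P : MvPolynomial (Fin n × Fin n) ℂ,
      (∀ (g : (Matrix (Fin n) (Fin n) ℂ)ˣ) (A : Matrix (Fin n) (Fin n) ℂ),
        evalMat P ((g : Matrix (Fin n) (Fin n) ℂ) * A *
          ((g⁻¹ : (Matrix (Fin n) (Fin n) ℂ)ˣ) : Matrix (Fin n) (Fin n) ℂ)) = evalMat P A) →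
      (∀ C : Matrix (Fin n) (Fin n) ℂ, IsCompanion C → evalMat P C = 0) →
      ∀ A : Matrix (Fin n) (Fin n) ℂ, evalMat P A = 0) ∧
    (∀ q : MvPolynomial (Fin n) ℂ,
      ∃ P : MvPolynomial (Fin n × Fin n) ℂ,
        (∀ (g : (Matrix (Fin n) (Fin n) ℂ)ˣ) (A : Matrix (Fin n) (Fin n) ℂ),
          evalMat P ((g : Matrix (Fin n) (Fin n) ℂ) * A *
            ((g⁻¹ : (Matrix (Fin n) (Fin n) ℂ)ˣ) : Matrix (Fin n) (Fin n) ℂ)) = evalMat P A) ∧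
        ∀ a : Fin n → ℂ, evalMat P (companionOf a) = MvPolynomial.eval a q) :=
  invariant_polynomials_restrict_iso_companion_general n
end

section
/- Let n ≥ 1, let f ∈ Matₙ(ℂ) be the matrix with (i+1,i) entry 1 for 1 ≤ i ≤ n−1 and all other entries 0, and let b ⊆ Matₙ(ℂ) be the subspace of upper triangular matrices. Then the affine subspace f + b is stable under conjugation by N: for every u ∈ N and every x ∈ f + b, one has u·x·u⁻¹ ∈ f + b. -/
/-!
Grade `Matₙ(ℂ)` by `j - i` on the entry `(i, j)`. The subdiagonal `f` has degree `-1`, so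
`f + b` lies in the degree `≥ -1` part, and for `u ∈ N` the matrix `u - 1` has degree `≥ 1`.
Hence `u x u⁻¹ - x = ((u - 1) x - x (u - 1)) u⁻¹` has degree `≥ 0`, i.e. is upper triangular.
-/

open Matrix

/-- The principal nilpotent matrix `f`, with entries `1` on the subdiagonal
and `0` elsewhere. -/
def fMat (n : ℕ) : Matrix (Fin n) (Fin n) ℂ :=
  Matrix.of fun i j => if (i : ℕ) = (j : ℕ) + 1 then 1 else 0

/-- A unipotent upper triangular matrix: upper triangular with all diagonal
entries equal to `1` (an element of the group `N`). -/
def IsUniUpper {n : ℕ} (u : Matrix (Fin n) (Fin n) ℂ) : Prop :=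
  u.BlockTriangular id ∧ ∀ i : Fin n, u i i = 1

namespace Matrix

variable {n : ℕ} {R : Type*}

def DegreeAtLeast [Zero R] (p : ℤ) (A : Matrix (Fin n) (Fin n) R) : Prop :=
  ∀ i j : Fin n, (j : ℤ) - i < p → A i j = 0

theorem degreeAtLeast_zero_iff [Zero R] {A : Matrix (Fin n) (Fin n) R} :
    DegreeAtLeast 0 A ↔ A.BlockTriangular id := by
  refine ⟨fun h i j hij => h i j ?_, fun h i j hij => h ?_⟩
  · have : (j : ℕ) < i := hij
    omega
  · show (j : ℕ) < i
    omega

theorem DegreeAtLeast.mono [Zero R] {p q : ℤ} {A : Matrix (Fin n) (Fin n) R}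
    (hA : DegreeAtLeast p A) (hqp : q ≤ p) : DegreeAtLeast q A :=
  fun i j hij => hA i j (hij.trans_le hqp)

theorem DegreeAtLeast.add [AddZeroClass R] {p : ℤ} {A B : Matrix (Fin n) (Fin n) R}
    (hA : DegreeAtLeast p A) (hB : DegreeAtLeast p B) : DegreeAtLeast p (A + B) :=
  fun i j hij => by rw [add_apply, hA i j hij, hB i j hij, add_zero]

theorem DegreeAtLeast.sub [SubNegZeroMonoid R] {p : ℤ} {A B : Matrix (Fin n) (Fin n) R}
    (hA : DegreeAtLeast p A) (hB : DegreeAtLeast p B) : DegreeAtLeast p (A - B) :=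
  fun i j hij => by rw [sub_apply, hA i j hij, hB i j hij, sub_zero]

theorem DegreeAtLeast.mul [NonUnitalNonAssocSemiring R] {p q : ℤ}
    {A B : Matrix (Fin n) (Fin n) R} (hA : DegreeAtLeast p A) (hB : DegreeAtLeast q B) :
    DegreeAtLeast (p + q) (A * B) := by
  intro i j hij
  rw [mul_apply]
  refine Finset.sum_eq_zero fun k _ => ?_
  by_cases hik : (k : ℤ) - i < p
  · rw [hA i k hik, zero_mul]
  · rw [hB k j (by omega), mul_zero]

theorem DegreeAtLeast.mul_mul_sub [CommRing R] {p : ℤ} {U V x : Matrix (Fin n) (Fin n) R}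
    (hx : DegreeAtLeast p x) (hUV : U * V = 1) (hU : DegreeAtLeast 1 (U - 1))
    (hV : DegreeAtLeast 0 V) : DegreeAtLeast (p + 1) (U * x * V - x) := by
  have hcomm : U * x * V - x = ((U - 1) * x - x * (U - 1)) * V := by
    simp only [sub_mul, mul_sub, mul_one, one_mul, mul_assoc, hUV]
    abel
  rw [hcomm, ← add_zero (p + 1)]
  exact ((add_comm 1 p ▸ hU.mul hx).sub (hx.mul hU)).mul hV

end Matrix

theorem degreeAtLeast_fMat (n : ℕ) : DegreeAtLeast (-1) (fMat n) := by
  intro i j hij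
  simp only [fMat, of_apply, ite_eq_right_iff]
  omega

theorem IsUniUpper.degreeAtLeast_sub_one {n : ℕ} {u : Matrix (Fin n) (Fin n) ℂ}
    (hu : IsUniUpper u) : DegreeAtLeast 1 (u - 1) := by
  intro i j hij
  obtain hji | rfl : j < i ∨ j = i := by omega
  · rw [Matrix.sub_apply, hu.1 hji, one_apply_ne hji.ne', sub_zero]
  · rw [Matrix.sub_apply, hu.2, one_apply_eq, sub_self]

theorem IsUniUpper.degreeAtLeast_inv {n : ℕ} {u : (Matrix (Fin n) (Fin n) ℂ)ˣ}
    (hu : IsUniUpper (u : Matrix (Fin n) (Fin n) ℂ)) :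
    DegreeAtLeast 0 ((u⁻¹ : (Matrix (Fin n) (Fin n) ℂ)ˣ) : Matrix (Fin n) (Fin n) ℂ) := by
  have := u.invertible
  rw [coe_units_inv, degreeAtLeast_zero_iff]
  exact blockTriangular_inv_of_blockTriangular hu.1

theorem fb_stable_under_N_general (n : ℕ)
    (u : (Matrix (Fin n) (Fin n) ℂ)ˣ)
    (hu : IsUniUpper (u : Matrix (Fin n) (Fin n) ℂ))
    (x : Matrix (Fin n) (Fin n) ℂ)
    (hx : ∃ b : Matrix (Fin n) (Fin n) ℂ, b.BlockTriangular id ∧ x = fMat n + b) :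
    ∃ b' : Matrix (Fin n) (Fin n) ℂ, b'.BlockTriangular id ∧
      (u : Matrix (Fin n) (Fin n) ℂ) * x *
        ((u⁻¹ : (Matrix (Fin n) (Fin n) ℂ)ˣ) : Matrix (Fin n) (Fin n) ℂ) = fMat n + b' := by
  obtain ⟨b, hb, rfl⟩ := hx
  have hx : DegreeAtLeast (-1) (fMat n + b) :=
    (degreeAtLeast_fMat n).add ((degreeAtLeast_zero_iff.mpr hb).mono (by norm_num))
  have hconj := hx.mul_mul_sub u.mul_inv hu.degreeAtLeast_sub_one hu.degreeAtLeast_inv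
  rw [neg_add_cancel, degreeAtLeast_zero_iff] at hconj
  exact ⟨_, hb.add hconj, by abel⟩

/-- The affine subspace `f + b` (with `b` the upper triangular matrices) is stable
under conjugation by the group `N` of unipotent upper triangular matrices. -/
theorem fb_stable_under_N (n : ℕ) (hn : 1 ≤ n)
    (u : (Matrix (Fin n) (Fin n) ℂ)ˣ)
    (hu : IsUniUpper (u : Matrix (Fin n) (Fin n) ℂ))
    (x : Matrix (Fin n) (Fin n) ℂ)
    (hx : ∃ b : Matrix (Fin n) (Fin n) ℂ, b.BlockTriangular id ∧ x = fMat n + b) :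
    ∃ b' : Matrix (Fin n) (Fin n) ℂ, b'.BlockTriangular id ∧
      (u : Matrix (Fin n) (Fin n) ℂ) * x *
        ((u⁻¹ : (Matrix (Fin n) (Fin n) ℂ)ˣ) : Matrix (Fin n) (Fin n) ℂ) = fMat n + b' :=
  fb_stable_under_N_general n u hu x hx
end

section
/- Let n ≥ 1, let f ∈ Matₙ(ℂ) be the matrix with (i+1,i) entry 1 for 1 ≤ i ≤ n−1 and all other entries 0, and let a ⊆ Matₙ(ℂ) be the subspace of matrices all of whose entries outside the last column are 0. Then Matₙ(ℂ) = a + [Matₙ(ℂ), f]: every A ∈ Matₙ(ℂ) can be written A = B + (Cf − fC) with B ∈ a and C ∈ Matₙ(ℂ). -/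
/-!
Right multiplication by `f` shifts columns to the left and left multiplication shifts rows
down, so off the last column `A = B + (C f − f C)` reads `C_{·,j+1} = A_{·,j} + f C_{·,j}`.
This determines `C` column by column, starting from a zero first column.
-/

open Matrix

theorem mul_fMat_apply_of_lt {n : ℕ} (M : Matrix (Fin n) (Fin n) ℂ) (i j : Fin n)
    (hj : (j : ℕ) + 1 < n) : (M * fMat n) i j = M i ⟨j + 1, hj⟩ := by
  rw [mul_apply, Finset.sum_eq_single ⟨j + 1, hj⟩]
  · simp [fMat]
  · intro k _ hk
    have : (k : ℕ) ≠ j + 1 := fun h => hk (Fin.ext h)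
    simp [fMat, this]
  · simp

theorem exists_apply_succ_eq_add_mul_apply {R : Type*} [NonUnitalNonAssocSemiring R] {n : ℕ}
    (A N : Matrix (Fin n) (Fin n) R) :
    ∃ C : Matrix (Fin n) (Fin n) R,
      ∀ (i j : Fin n) (hj : (j : ℕ) + 1 < n), C i ⟨j + 1, hj⟩ = A i j + (N * C) i j := by
  let col : ℕ → Fin n → R := fun k => Nat.rec 0
    (fun k c => (fun i => if hk : k < n then A i ⟨k, hk⟩ else 0) + N *ᵥ c) k
  refine ⟨Matrix.of fun i k => col k i, fun i j hj => ?_⟩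
  simp [col, mul_apply, mulVec, dotProduct]

theorem matrix_eq_lastColumn_add_bracket_f_general (n : ℕ)
    (A : Matrix (Fin n) (Fin n) ℂ) :
    ∃ B C : Matrix (Fin n) (Fin n) ℂ,
      (∀ i j : Fin n, (j : ℕ) + 1 ≠ n → B i j = 0) ∧
      A = B + (C * fMat n - fMat n * C) := by
  obtain ⟨C, hC⟩ := exists_apply_succ_eq_add_mul_apply A (fMat n)
  refine ⟨A - (C * fMat n - fMat n * C), C, fun i j hj => ?_, by abel⟩
  have hj' : (j : ℕ) + 1 < n := lt_of_le_of_ne j.isLt hj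
  rw [Matrix.sub_apply, Matrix.sub_apply, mul_fMat_apply_of_lt C i j hj', hC]
  abel

/-- `Matₙ(ℂ) = a + [Matₙ(ℂ), f]`, where `a` is the subspace of matrices supported
in the last column: every matrix `A` can be written `A = B + (C f − f C)` with
`B ∈ a` and `C` arbitrary. -/
theorem matrix_eq_lastColumn_add_bracket_f (n : ℕ) (hn : 1 ≤ n)
    (A : Matrix (Fin n) (Fin n) ℂ) :
    ∃ B C : Matrix (Fin n) (Fin n) ℂ,
      (∀ i j : Fin n, (j : ℕ) + 1 ≠ n → B i j = 0) ∧
      A = B + (C * fMat n - fMat n * C) :=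
  matrix_eq_lastColumn_add_bracket_f_general n A
end

section
/- Let n ≥ 1, let f ∈ Matₙ(ℂ) be the matrix with (i+1,i) entry 1 for 1 ≤ i ≤ n−1 and all other entries 0, and let b ⊆ Matₙ(ℂ) be the subspace of upper triangular matrices. For every x ∈ f + b, the affine space f + b intersects the conjugation orbit of x transversally at x: Matₙ(ℂ) = b + [Matₙ(ℂ), x], i.e. every A ∈ Matₙ(ℂ) can be written A = B + (Cx − xC) with B ∈ b and C ∈ Matₙ(ℂ). -/
/-!
If `x = f + u` with `u` upper triangular and `C` is supported on the `d`-th subdiagonal, then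
`[C, x]` vanishes below the `(d+1)`-th subdiagonal and its entry at `(j+d+1, j)` is
`C (j+d+1, j+1) - C (j+d, j)`. Taking the entries of `C` to be the partial sums of the `(d+1)`-th
subdiagonal of `A` therefore removes the lowest nonzero subdiagonal of `A` modulo `[Matₙ, x]`,
and descending induction on `d` leaves an upper triangular matrix.
-/

open Matrix

open Finset

variable {R : Type*} {n : ℕ}

def LowerBandwidthLE [Zero R] (d : ℕ) (A : Matrix (Fin n) (Fin n) R) : Prop :=
  ∀ i j : Fin n, (j : ℕ) + d < i → A i j = 0

namespace LowerBandwidthLE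

variable {d e : ℕ} {A B : Matrix (Fin n) (Fin n) R}

lemma zero_iff_blockTriangular [Zero R] : LowerBandwidthLE 0 A ↔ A.BlockTriangular id := by
  simp only [LowerBandwidthLE, BlockTriangular, add_zero, id, Fin.lt_def]

lemma of_card [Zero R] (A : Matrix (Fin n) (Fin n) R) : LowerBandwidthLE n A :=
  fun i _ _ => absurd i.isLt (by omega)

lemma mono [Zero R] (hA : LowerBandwidthLE d A) (h : d ≤ e) : LowerBandwidthLE e A :=
  fun i j hij => hA i j (by omega)

lemma sub [AddGroup R] (hA : LowerBandwidthLE d A) (hB : LowerBandwidthLE d B) :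
    LowerBandwidthLE d (A - B) :=
  fun i j hij => by rw [Matrix.sub_apply, hA i j hij, hB i j hij, sub_zero]

lemma mul [NonUnitalNonAssocSemiring R] (hA : LowerBandwidthLE d A)
    (hB : LowerBandwidthLE e B) : LowerBandwidthLE (d + e) (A * B) := by
  intro i j hij
  rw [mul_apply]
  refine sum_eq_zero fun k _ => ?_
  by_cases hik : (k : ℕ) + d < i
  · rw [hA i k hik, zero_mul]
  · rw [hB k j (by omega), mul_zero]

end LowerBandwidthLE

def ofSubdiag [Zero R] (d : ℕ) (c : ℕ → R) : Matrix (Fin n) (Fin n) R :=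
  of fun i j => if (i : ℕ) = j + d then c j else 0

section ofSubdiag

variable {d : ℕ} {c : ℕ → R}

lemma lowerBandwidthLE_ofSubdiag [Zero R] : LowerBandwidthLE d (ofSubdiag (n := n) d c) :=
  fun _ _ h => if_neg (by omega)

lemma ofSubdiag_mul_apply [NonUnitalNonAssocSemiring R] (M : Matrix (Fin n) (Fin n) R)
    {i j k : Fin n} (hk : (i : ℕ) = k + d) : (ofSubdiag (n := n) d c * M) i j = c k * M k j := by
  rw [mul_apply, sum_eq_single_of_mem k (mem_univ k) fun l _ hl => ?_]
  · simp [ofSubdiag, hk]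
  · simp [ofSubdiag, show (i : ℕ) ≠ l + d from fun h => hl (Fin.ext (by omega))]

lemma mul_ofSubdiag_apply [NonUnitalNonAssocSemiring R] (M : Matrix (Fin n) (Fin n) R)
    {i j k : Fin n} (hk : (k : ℕ) = j + d) : (M * ofSubdiag (n := n) d c) i j = M i k * c j := by
  rw [mul_apply, sum_eq_single_of_mem k (mem_univ k) fun l _ hl => ?_]
  · simp [ofSubdiag, hk]
  · simp [ofSubdiag, show (l : ℕ) ≠ j + d from fun h => hl (Fin.ext (by omega))]

lemma ofSubdiag_commutator_apply [Ring R] {x : Matrix (Fin n) (Fin n) R}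
    (hx : ∀ i j : Fin n, (i : ℕ) = j + 1 → x i j = 1) {i j : Fin n}
    (hij : (i : ℕ) = j + d + 1) :
    (ofSubdiag d c * x - x * ofSubdiag d c : Matrix (Fin n) (Fin n) R) i j =
      c (j + 1) - c j := by
  have hj : (j : ℕ) + 1 < n := by omega
  have hjd : (j : ℕ) + d < n := by omega
  rw [Matrix.sub_apply, ofSubdiag_mul_apply x (k := ⟨j + 1, hj⟩) (by dsimp only; omega),
    mul_ofSubdiag_apply x (k := ⟨j + d, hjd⟩) rfl, hx _ _ rfl, hx _ _ (by omega),
    mul_one, one_mul]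

end ofSubdiag

def subdiag [Zero R] (A : Matrix (Fin n) (Fin n) R) (k t : ℕ) : R :=
  if h : t + k < n then A ⟨t + k, h⟩ ⟨t, by omega⟩ else 0

lemma subdiag_apply [Zero R] (A : Matrix (Fin n) (Fin n) R) {i j : Fin n} {k : ℕ}
    (h : (i : ℕ) = j + k) : subdiag A k j = A i j := by
  rw [subdiag, dif_pos (by omega)]
  congr 1
  exact Fin.ext h.symm

section Transversal

variable [Ring R] {x : Matrix (Fin n) (Fin n) R}

lemma exists_lowerBandwidthLE_sub_commutator (hx : LowerBandwidthLE 1 x)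
    (hx_subdiag : ∀ i j : Fin n, (i : ℕ) = j + 1 → x i j = 1) {d : ℕ}
    {A : Matrix (Fin n) (Fin n) R} (hA : LowerBandwidthLE (d + 1) A) :
    ∃ C, LowerBandwidthLE d (A - (C * x - x * C)) := by
  set c : ℕ → R := fun j => ∑ t ∈ range j, subdiag A (d + 1) t
  refine ⟨ofSubdiag d c, fun i j hij => ?_⟩
  rcases (show (i : ℕ) = j + d + 1 ∨ (j : ℕ) + (d + 1) < i by omega) with h | h
  · rw [Matrix.sub_apply, ofSubdiag_commutator_apply hx_subdiag h, sum_range_succ_sub_sum,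
      subdiag_apply A (by omega), sub_self]
  · have hcomm : LowerBandwidthLE (d + 1) (ofSubdiag d c * x - x * ofSubdiag d c) :=
      (lowerBandwidthLE_ofSubdiag.mul hx).sub
        ((hx.mul lowerBandwidthLE_ofSubdiag).mono (by omega))
    rw [Matrix.sub_apply, hA i j h, hcomm i j h, sub_zero]

lemma exists_blockTriangular_sub_commutator (hx : LowerBandwidthLE 1 x)
    (hx_subdiag : ∀ i j : Fin n, (i : ℕ) = j + 1 → x i j = 1) :
    ∀ (d : ℕ) (A : Matrix (Fin n) (Fin n) R), LowerBandwidthLE d A →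
      ∃ C, (A - (C * x - x * C)).BlockTriangular id
  | 0, A, hA => ⟨0, by simpa [LowerBandwidthLE.zero_iff_blockTriangular] using hA⟩
  | d + 1, A, hA => by
    obtain ⟨C₁, hC₁⟩ := exists_lowerBandwidthLE_sub_commutator hx hx_subdiag hA
    obtain ⟨C₂, hC₂⟩ := exists_blockTriangular_sub_commutator hx hx_subdiag d _ hC₁
    refine ⟨C₁ + C₂, ?_⟩
    convert hC₂ using 1
    noncomm_ring

end Transversal

lemma apply_eq_of_blockTriangular_sub {M x : Matrix (Fin n) (Fin n) R} [AddGroup R]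
    (hx : (x - M).BlockTriangular id) {i j : Fin n} (h : j < i) : x i j = M i j :=
  sub_eq_zero.mp (hx h)

theorem fb_transversal_to_orbits_general (n : ℕ)
    (x : Matrix (Fin n) (Fin n) ℂ) (hx : (x - fMat n).BlockTriangular id)
    (A : Matrix (Fin n) (Fin n) ℂ) :
    ∃ B C : Matrix (Fin n) (Fin n) ℂ,
      B.BlockTriangular id ∧ A = B + (C * x - x * C) := by
  have hx_band : LowerBandwidthLE 1 x := fun i j h => by
    rw [apply_eq_of_blockTriangular_sub hx (by rw [Fin.lt_def]; omega), fMat, of_apply,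
      if_neg (by omega)]
  have hx_subdiag : ∀ i j : Fin n, (i : ℕ) = j + 1 → x i j = 1 := fun i j h => by
    rw [apply_eq_of_blockTriangular_sub hx (by rw [Fin.lt_def]; omega), fMat, of_apply, if_pos h]
  obtain ⟨C, hC⟩ :=
    exists_blockTriangular_sub_commutator hx_band hx_subdiag n A (LowerBandwidthLE.of_card A)
  exact ⟨A - (C * x - x * C), C, hC, by abel⟩

/-- For every `x ∈ f + b`, the affine space `f + b` meets the conjugation orbit of
`x` transversally at `x`: `Matₙ(ℂ) = b + [Matₙ(ℂ), x]`, i.e. every matrix `A`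
can be written `A = B + (C x − x C)` with `B` upper triangular. -/
theorem fb_transversal_to_orbits (n : ℕ) (hn : 1 ≤ n)
    (x : Matrix (Fin n) (Fin n) ℂ) (hx : (x - fMat n).BlockTriangular id)
    (A : Matrix (Fin n) (Fin n) ℂ) :
    ∃ B C : Matrix (Fin n) (Fin n) ℂ,
      B.BlockTriangular id ∧ A = B + (C * x - x * C) :=
  fb_transversal_to_orbits_general n x hx A
end

section
/- Let n ≥ 1 and let a ⊆ Matₙ(ℂ) be the subspace of matrices all of whose entries outside the last column are 0. For every companion matrix x, the set S of companion matrices intersects the conjugation orbit of x transversally at x: Matₙ(ℂ) = a + [Matₙ(ℂ), x], i.e. every A ∈ Matₙ(ℂ) can be written A = B + (Cx − xC) with B ∈ a and C ∈ Matₙ(ℂ). -/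
open Matrix

/-!
Right multiplication by a companion matrix `x` shifts columns: column `j` of `C * x` is
column `j + 1` of `C` for `j + 1 < n`. So `C * x - x * C` agrees with `A` off the last column
as soon as the columns `c_j` of `C` satisfy `c_0 = 0` and `c_{j+1} = a_j + x c_j`, where `a_j`
is column `j` of `A`; this recursion defines `C`, and `B := A - (C * x - x * C)` is then
supported in the last column.
-/

section ColumnRecursion

variable {R : Type*} [Semiring R] {n : ℕ}

noncomputable def shiftSolutionColumn (x A : Matrix (Fin n) (Fin n) R) : ℕ → Fin n → R
  | 0 => 0
  | j + 1 => (if h : j < n then fun i => A i ⟨j, h⟩ else 0) + x *ᵥ shiftSolutionColumn x A j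

noncomputable def shiftSolution (x A : Matrix (Fin n) (Fin n) R) : Matrix (Fin n) (Fin n) R :=
  of fun i j => shiftSolutionColumn x A j i

theorem shiftSolution_apply_succ (x A : Matrix (Fin n) (Fin n) R) (i j : Fin n)
    (hj : (j : ℕ) + 1 < n) :
    shiftSolution x A i ⟨j + 1, hj⟩ = A i j + (x * shiftSolution x A) i j := by
  simp [shiftSolution, shiftSolutionColumn, mul_apply, mulVec, dotProduct]

end ColumnRecursion

theorem IsCompanion.mul_apply_of_succ_lt {n : ℕ} {x : Matrix (Fin n) (Fin n) ℂ}
    (hx : IsCompanion x) (C : Matrix (Fin n) (Fin n) ℂ) (i j : Fin n) (hj : (j : ℕ) + 1 < n) :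
    (C * x) i j = C i ⟨j + 1, hj⟩ := by
  rw [mul_apply, Finset.sum_eq_single_of_mem ⟨j + 1, hj⟩ (Finset.mem_univ _)]
  · rw [(hx _ j hj).1 rfl, mul_one]
  · intro k _ hk
    rw [(hx k j hj).2 (fun h => hk (Fin.ext h)), mul_zero]

theorem companion_slice_transversal_to_orbits_general (n : ℕ)
    (x : Matrix (Fin n) (Fin n) ℂ) (hx : IsCompanion x)
    (A : Matrix (Fin n) (Fin n) ℂ) :
    ∃ B C : Matrix (Fin n) (Fin n) ℂ,
      (∀ i j : Fin n, (j : ℕ) + 1 ≠ n → B i j = 0) ∧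
      A = B + (C * x - x * C) := by
  refine ⟨A - (shiftSolution x A * x - x * shiftSolution x A), shiftSolution x A,
    fun i j hj => ?_, by abel⟩
  have hj' : (j : ℕ) + 1 < n := lt_of_le_of_ne j.isLt hj
  rw [Matrix.sub_apply, Matrix.sub_apply, hx.mul_apply_of_succ_lt _ i j hj',
    shiftSolution_apply_succ]
  ring

/-- For every companion matrix `x`, the set `S` of companion matrices meets the
conjugation orbit of `x` transversally at `x`: `Matₙ(ℂ) = a + [Matₙ(ℂ), x]`,
where `a` is the subspace of matrices supported in the last column: every matrix
`A` can be written `A = B + (C x − x C)` with `B ∈ a`. -/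
theorem companion_slice_transversal_to_orbits (n : ℕ) (hn : 1 ≤ n)
    (x : Matrix (Fin n) (Fin n) ℂ) (hx : IsCompanion x)
    (A : Matrix (Fin n) (Fin n) ℂ) :
    ∃ B C : Matrix (Fin n) (Fin n) ℂ,
      (∀ i j : Fin n, (j : ℕ) + 1 ≠ n → B i j = 0) ∧
      A = B + (C * x - x * C) :=
  companion_slice_transversal_to_orbits_general n x hx A
end

section
/- Let n ≥ 1. The map θ_χ : n → U(glₙ(ℂ)) ⊗ Cl defined by θ_χ(x) = (ι_U(x) − χ(x)·1) ⊗ 1 + 1 ⊗ ρ(x) is a Lie algebra homomorphism for the commutator bracket: θ_χ(x)θ_χ(y) − θ_χ(y)θ_χ(x) = θ_χ([x,y]) for all x, y ∈ n. -/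
open Matrix

attribute [local instance 100] LieRing.ofAssociativeRing
attribute [local instance 100] LieAlgebra.ofAssociativeAlgebra

noncomputable section

/-- The subspace `n` of strictly upper triangular `n×n` complex matrices. -/
def strictUpper (n : ℕ) : Submodule ℂ (Matrix (Fin n) (Fin n) ℂ) where
  carrier := {M | ∀ i j : Fin n, j ≤ i → M i j = 0}
  add_mem' := by
    intro A B hA hB i j hij
    simp [Matrix.add_apply, hA i j hij, hB i j hij]
  zero_mem' := by intro i j _; rfl
  smul_mem' := by
    intro c A hA i j hij
    simp [Matrix.smul_apply, hA i j hij]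

/-- The underlying module `n ⊕ n*` of the Clifford algebra. -/
abbrev ClModule (n : ℕ) :=
  (strictUpper n) × Module.Dual ℂ (strictUpper n)

/-- The bilinear form `((x,φ),(y,ψ)) ↦ φ(y)` on `n ⊕ n*`. -/
def clBilin (n : ℕ) : ClModule n →ₗ[ℂ] ClModule n →ₗ[ℂ] ℂ :=
  LinearMap.mk₂ ℂ (fun p q => p.2 q.1)
    (fun p p' q => by simp)
    (fun c p q => by simp)
    (fun p q q' => by simp)
    (fun c p q => by simp)

/-- The quadratic form `Q(x, φ) = φ(x)` on `n ⊕ n*`, whose polar form is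
`((x,φ),(y,ψ)) ↦ φ(y) + ψ(x)`. -/
def clQ (n : ℕ) : QuadraticForm ℂ (ClModule n) :=
  LinearMap.BilinMap.toQuadraticMap (clBilin n)

/-- The Clifford algebra of `n ⊕ n*`. -/
abbrev Cl (n : ℕ) := CliffordAlgebra (clQ n)

/-- The canonical embedding `ι : n ⊕ n* → Cl`. -/
def clι (n : ℕ) : ClModule n →ₗ[ℂ] Cl n := CliffordAlgebra.ι (clQ n)

/-- The projection of a matrix onto its strictly upper triangular part, as a
linear map to `n`. It is the identity on strictly upper triangular matrices. -/
def strictUpperPart (n : ℕ) : Matrix (Fin n) (Fin n) ℂ →ₗ[ℂ] strictUpper n where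
  toFun := fun M =>
    ⟨Matrix.of fun i j => if i < j then M i j else 0, by
      intro i j hij
      simp only [Matrix.of_apply]
      exact if_neg (not_lt.mpr hij)⟩
  map_add' := by
    intro A B
    apply Subtype.ext
    funext i j
    simp only [Matrix.of_apply, Submodule.coe_add, Matrix.add_apply]
    split <;> simp
  map_smul' := by
    intro c A
    apply Subtype.ext
    funext i j
    simp only [Matrix.of_apply, SetLike.val_smul, Matrix.smul_apply, RingHom.id_apply]
    split <;> simp

/-- The index set `Δ₊ = {(i,j) : i < j}` of the basis of matrix units of `n`. -/
abbrev DeltaP (n : ℕ) := {p : Fin n × Fin n // p.1 < p.2}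

/-- The basis element `e_{ij} ∈ n` (matrix unit), for `(i,j) ∈ Δ₊`. -/
def eBasis {n : ℕ} (p : DeltaP n) : strictUpper n :=
  ⟨Matrix.single p.1.1 p.1.2 1, by
    intro i j hij
    rw [Matrix.single]
    simp only [Matrix.of_apply, ite_eq_right_iff, one_ne_zero, imp_false, not_and]
    intro h1 h2
    exact absurd (h1 ▸ h2 ▸ p.2) (not_lt.mpr hij)⟩

/-- The dual basis element `e*_{ij} ∈ n*`: the coordinate functional picking out
the `(i,j)` entry. -/
def eDual {n : ℕ} (p : DeltaP n) : Module.Dual ℂ (strictUpper n) where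
  toFun := fun x => (x : Matrix (Fin n) (Fin n) ℂ) p.1.1 p.1.2
  map_add' := by intro x y; simp
  map_smul' := by intro c x; simp

/-- The map `ρ : n → Cl`, `ρ(x) = Σ_{i<j} ι([x, e_{ij}], 0) ι(0, e*_{ij})`. -/
def clρ (n : ℕ) (x : Matrix (Fin n) (Fin n) ℂ) : Cl n :=
  ∑ p : DeltaP n,
    clι n (strictUpperPart n (x * (eBasis p : Matrix (Fin n) (Fin n) ℂ)
        - (eBasis p : Matrix (Fin n) (Fin n) ℂ) * x), 0) *
      clι n (0, eDual p)

open scoped TensorProduct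

/-- The character `χ(x) = tr(f x)` of `n`. -/
def chiFn (n : ℕ) (x : Matrix (Fin n) (Fin n) ℂ) : ℂ :=
  Matrix.trace (fMat n * x)

/-- The tensor algebra `U(glₙ(ℂ)) ⊗ Cl`. -/
abbrev UCl (n : ℕ) :=
  UniversalEnvelopingAlgebra ℂ (Matrix (Fin n) (Fin n) ℂ) ⊗[ℂ] Cl n

/-- The map `θ_χ : n → U(glₙ(ℂ)) ⊗ Cl`,
`θ_χ(x) = (ι_U(x) − χ(x)·1) ⊗ 1 + 1 ⊗ ρ(x)`. -/
def thetaChi (n : ℕ) (x : Matrix (Fin n) (Fin n) ℂ) : UCl n :=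
  (UniversalEnvelopingAlgebra.ι ℂ x -
      algebraMap ℂ (UniversalEnvelopingAlgebra ℂ (Matrix (Fin n) (Fin n) ℂ)) (chiFn n x))
    ⊗ₜ[ℂ] (1 : Cl n) +
  (1 : UniversalEnvelopingAlgebra ℂ (Matrix (Fin n) (Fin n) ℂ)) ⊗ₜ[ℂ] clρ n x


/-!
Write `θ_χ(x) = u(x) ⊗ 1 + 1 ⊗ ρ(x)`. Elements of the form `a ⊗ 1` and `1 ⊗ b` commute, so the
commutator of `θ_χ(x)` and `θ_χ(y)` splits as `[u(x), u(y)] ⊗ 1 + 1 ⊗ [ρ(x), ρ(y)]`.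

The shift by the scalar `χ(x)` is central and `ι_U` is a Lie map, so `[u(x), u(y)] = ι_U([x, y])`;
moreover `χ([x, y]) = 0`, because a product of two strictly upper triangular matrices vanishes on
the first superdiagonal, which is all that `tr(f ·)` sees.

For the Clifford part, `a_p = ι(e_p, 0)` and `b_p = ι(0, e*_p)` satisfy the canonical
anticommutation relations, and `ρ(x) = Σ M_{qp} a_q b_p` where `M` is the matrix of `ad x` on `n`.
From `[a_q b_p, a_s b_r] = δ_{sp} a_q b_r - δ_{qr} a_s b_p` one gets `[Q(M), Q(N)] = Q([M, N])` for
`Q(M) = Σ M_{qp} a_q b_p`, and `x ↦ M` is a Lie map because `n` is closed under multiplication.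
-/

section Commutators

variable {R A B : Type*} [CommRing R] [Ring A] [Algebra R A] [Ring B] [Algebra R B]

open TensorProduct in
theorem tmul_one_add_one_tmul_commutator (a a' : A) (b b' : B) :
    (a ⊗ₜ[R] (1 : B) + (1 : A) ⊗ₜ b) * (a' ⊗ₜ 1 + 1 ⊗ₜ b') -
        (a' ⊗ₜ 1 + 1 ⊗ₜ b') * (a ⊗ₜ 1 + 1 ⊗ₜ b) =
      (a * a' - a' * a) ⊗ₜ 1 + 1 ⊗ₜ (b * b' - b' * b) := by
  simp only [add_mul, mul_add, Algebra.TensorProduct.tmul_mul_tmul, mul_one, one_mul,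
    sub_tmul, tmul_sub]
  abel

theorem sub_algebraMap_commutator (a a' : A) (c c' : R) :
    (a - algebraMap R A c) * (a' - algebraMap R A c') -
        (a' - algebraMap R A c') * (a - algebraMap R A c) = a * a' - a' * a := by
  simp only [sub_mul, mul_sub, ← map_mul, mul_comm c c', Algebra.commutes c a',
    Algebra.commutes c' a]
  abel

end Commutators

theorem UniversalEnvelopingAlgebra.ι_commutator {R L : Type*} [CommRing R] [Ring L]
    [Algebra R L] (x y : L) :
    ι R (x * y - y * x) = ι R x * ι R y - ι R y * ι R x := by
  rw [← Ring.lie_def, LieHom.map_lie, Ring.lie_def]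

section CAR

variable {R A ι : Type*} [CommRing R] [Ring A] [Algebra R A] {a b : ι → A}

def carQuadratic [Fintype ι] (a b : ι → A) (M : Matrix ι ι R) : A :=
  ∑ z : ι × ι, M z.1 z.2 • (a z.1 * b z.2)

theorem carQuadratic_sub [Fintype ι] (M N : Matrix ι ι R) :
    carQuadratic a b (M - N) = carQuadratic a b M - carQuadratic a b N := by
  simp only [carQuadratic, Matrix.sub_apply, sub_smul, Finset.sum_sub_distrib]

variable [DecidableEq ι]

theorem car_commutator_mul (haa : ∀ p q, a p * a q = -(a q * a p))
    (hbb : ∀ p q, b p * b q = -(b q * b p))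
    (hab : ∀ p q, a p * b q + b q * a p = if p = q then 1 else 0) (q p s r : ι) :
    a q * b p * (a s * b r) - a s * b r * (a q * b p) =
      (if s = p then a q * b r else 0) - if q = r then a s * b p else 0 := by
  have hba : ∀ p q, b p * a q = (if q = p then 1 else 0) - a q * b p := fun p q =>
    eq_sub_of_add_eq' (hab q p)
  have hswap : a s * a q * (b r * b p) = a q * a s * (b p * b r) := by
    rw [haa, hbb, neg_mul_neg]
  calc a q * b p * (a s * b r) - a s * b r * (a q * b p)
      = a q * (b p * a s) * b r - a s * (b r * a q) * b p := by noncomm_ring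
    _ = (if s = p then a q * b r else 0) - (if q = r then a s * b p else 0)
          - (a q * a s * (b p * b r) - a s * a q * (b r * b p)) := by
        rw [hba, hba]
        split_ifs <;> noncomm_ring
    _ = _ := by rw [hswap, sub_self, sub_zero]

theorem sum_sum_ite_smul_eq_carQuadratic_mul [Fintype ι] (M N : Matrix ι ι R) :
    ∑ z : ι × ι, ∑ w : ι × ι,
        (M z.1 z.2 * N w.1 w.2) • (if w.1 = z.2 then a z.1 * b w.2 else 0) =
      carQuadratic a b (M * N) := by
  simp only [carQuadratic, Fintype.sum_prod_type, smul_ite, smul_zero, Finset.sum_ite_irrel,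
    Finset.sum_const_zero, Finset.sum_ite_eq', Finset.mem_univ, if_true, Matrix.mul_apply,
    Finset.sum_smul]
  exact Finset.sum_congr rfl fun q _ => Finset.sum_comm

theorem carQuadratic_commutator [Fintype ι] (haa : ∀ p q, a p * a q = -(a q * a p))
    (hbb : ∀ p q, b p * b q = -(b q * b p))
    (hab : ∀ p q, a p * b q + b q * a p = if p = q then 1 else 0) (M N : Matrix ι ι R) :
    carQuadratic a b M * carQuadratic a b N - carQuadratic a b N * carQuadratic a b M =
      carQuadratic a b (M * N - N * M) := by
  calc carQuadratic a b M * carQuadratic a b N - carQuadratic a b N * carQuadratic a b M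
      = ∑ z : ι × ι, ∑ w : ι × ι, (M z.1 z.2 * N w.1 w.2) •
          ((if w.1 = z.2 then a z.1 * b w.2 else 0) - if z.1 = w.2 then a w.1 * b z.2 else 0) := by
        simp only [carQuadratic, Finset.sum_mul_sum, smul_mul_smul_comm]
        conv_lhs => arg 2; rw [Finset.sum_comm]
        rw [← Finset.sum_sub_distrib]
        refine Finset.sum_congr rfl fun z _ => ?_
        rw [← Finset.sum_sub_distrib]
        refine Finset.sum_congr rfl fun w _ => ?_
        rw [mul_comm (N w.1 w.2), ← smul_sub, car_commutator_mul haa hbb hab]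
    _ = ∑ z : ι × ι, ∑ w : ι × ι,
          (M z.1 z.2 * N w.1 w.2) • (if w.1 = z.2 then a z.1 * b w.2 else 0) -
        ∑ z : ι × ι, ∑ w : ι × ι,
          (N z.1 z.2 * M w.1 w.2) • (if w.1 = z.2 then a z.1 * b w.2 else 0) := by
        simp only [smul_sub, Finset.sum_sub_distrib]
        conv_lhs => arg 2; rw [Finset.sum_comm]
        exact congrArg _ (Finset.sum_congr rfl fun z _ => Finset.sum_congr rfl fun w _ => by
          rw [mul_comm])
    _ = carQuadratic a b (M * N - N * M) := by
        rw [sum_sum_ite_smul_eq_carQuadratic_mul, sum_sum_ite_smul_eq_carQuadratic_mul,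
          carQuadratic_sub]

end CAR

namespace StrictUpper

variable {n : ℕ}

theorem mul_mem {x y : Matrix (Fin n) (Fin n) ℂ} (hx : x ∈ strictUpper n)
    (hy : y ∈ strictUpper n) : x * y ∈ strictUpper n := by
  intro i j hji
  rw [Matrix.mul_apply]
  refine Finset.sum_eq_zero fun k _ => ?_
  rcases lt_or_ge i k with hik | hki
  · rw [hy k j (hji.trans hik.le), mul_zero]
  · rw [hx i k hki, zero_mul]

theorem mul_apply_eq_zero_of_le_succ {x y : Matrix (Fin n) (Fin n) ℂ} (hx : x ∈ strictUpper n)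
    (hy : y ∈ strictUpper n) {k i : Fin n} (hik : (i : ℕ) ≤ k + 1) : (x * y) k i = 0 := by
  rw [Matrix.mul_apply]
  refine Finset.sum_eq_zero fun j _ => ?_
  rcases lt_or_ge k j with hkj | hjk
  · rw [hy j i (Fin.le_def.mpr (by omega)), mul_zero]
  · rw [hx k j hjk, zero_mul]

theorem commutator_mem {x y : Matrix (Fin n) (Fin n) ℂ} (hx : x ∈ strictUpper n)
    (hy : y ∈ strictUpper n) : x * y - y * x ∈ strictUpper n :=
  sub_mem (mul_mem hx hy) (mul_mem hy hx)

theorem coe_strictUpperPart {x : Matrix (Fin n) (Fin n) ℂ} (hx : x ∈ strictUpper n) :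
    (strictUpperPart n x : Matrix (Fin n) (Fin n) ℂ) = x := by
  ext i j
  change (if i < j then x i j else 0) = x i j
  split_ifs with hij
  · rfl
  · exact (hx i j (not_lt.mp hij)).symm

def equivFun (n : ℕ) : strictUpper n ≃ₗ[ℂ] (DeltaP n → ℂ) where
  toFun v p := eDual p v
  map_add' v w := funext fun p => map_add (eDual p) v w
  map_smul' c v := funext fun p => map_smul (eDual p) c v
  invFun f := ⟨Matrix.of fun i j => if h : i < j then f ⟨(i, j), h⟩ else 0,
    fun i j hji => dif_neg (not_lt.mpr hji)⟩
  left_inv v := by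
    ext i j
    change (if h : i < j then v.1 i j else 0) = v.1 i j
    split_ifs with hij
    · rfl
    · exact (v.2 i j (not_lt.mp hij)).symm
  right_inv f := funext fun p => dif_pos p.2

def basis (n : ℕ) : Module.Basis (DeltaP n) ℂ (strictUpper n) :=
  Module.Basis.ofEquivFun (equivFun n)

theorem basis_repr_apply (v : strictUpper n) (p : DeltaP n) : (basis n).repr v p = eDual p v :=
  rfl

theorem basis_apply (p : DeltaP n) : basis n p = eBasis p := by
  rw [basis, Module.Basis.coe_ofEquivFun]
  ext i j
  change (if h : i < j then (Pi.single p 1 : DeltaP n → ℂ) ⟨(i, j), h⟩ else 0) =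
    Matrix.single p.1.1 p.1.2 (1 : ℂ) i j
  split_ifs with hij
  · simp [Pi.single_apply, Matrix.single_apply, Subtype.ext_iff, Prod.ext_iff, eq_comm]
  · rw [Matrix.single_apply, if_neg]
    rintro ⟨rfl, rfl⟩
    exact hij p.2

theorem eDual_eBasis (p q : DeltaP n) : eDual q (eBasis p) = if p = q then 1 else 0 := by
  rw [← basis_apply, ← basis_repr_apply, Module.Basis.repr_self, Finsupp.single_apply]

def ad (x : Matrix (Fin n) (Fin n) ℂ) : strictUpper n →ₗ[ℂ] strictUpper n :=
  strictUpperPart n ∘ₗ (LinearMap.mulLeft ℂ x - LinearMap.mulRight ℂ x) ∘ₗ (strictUpper n).subtype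

theorem coe_ad {x : Matrix (Fin n) (Fin n) ℂ} (hx : x ∈ strictUpper n) (v : strictUpper n) :
    (ad x v : Matrix (Fin n) (Fin n) ℂ) = x * v - v * x :=
  coe_strictUpperPart (commutator_mem hx v.2)

theorem ad_commutator {x y : Matrix (Fin n) (Fin n) ℂ} (hx : x ∈ strictUpper n)
    (hy : y ∈ strictUpper n) : ad (x * y - y * x) = ad x * ad y - ad y * ad x := by
  ext v : 2
  simp only [LinearMap.sub_apply, Module.End.mul_apply, Submodule.coe_sub,
    coe_ad (commutator_mem hx hy), coe_ad hx, coe_ad hy]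
  noncomm_ring

def adMatrix (x : Matrix (Fin n) (Fin n) ℂ) : Matrix (DeltaP n) (DeltaP n) ℂ :=
  LinearMap.toMatrixAlgEquiv (basis n) (ad x)

theorem adMatrix_commutator {x y : Matrix (Fin n) (Fin n) ℂ} (hx : x ∈ strictUpper n)
    (hy : y ∈ strictUpper n) :
    adMatrix (x * y - y * x) = adMatrix x * adMatrix y - adMatrix y * adMatrix x := by
  rw [adMatrix, ad_commutator hx hy, adMatrix, adMatrix, ← map_mul, ← map_mul]
  exact map_sub (LinearMap.toMatrixAlgEquiv (basis n)) _ _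

end StrictUpper

section Clifford

variable {n : ℕ}

theorem clι_mul_clι_add_swap (v w : ClModule n) :
    clι n v * clι n w + clι n w * clι n v = algebraMap ℂ (Cl n) (v.2 w.1 + w.2 v.1) := by
  rw [clι, CliffordAlgebra.ι_mul_ι_add_swap]
  congr 1
  change clBilin n (v + w) (v + w) - clBilin n v v - clBilin n w w = _
  simp only [clBilin, LinearMap.mk₂_apply, map_add, LinearMap.add_apply]
  ring

theorem clι_inl_mul_clι_inl (v w : strictUpper n) :
    clι n (v, 0) * clι n (w, 0) = -(clι n (w, 0) * clι n (v, 0)) :=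
  eq_neg_of_add_eq_zero_left (by simp [clι_mul_clι_add_swap])

theorem clι_inr_mul_clι_inr (φ ψ : Module.Dual ℂ (strictUpper n)) :
    clι n (0, φ) * clι n (0, ψ) = -(clι n (0, ψ) * clι n (0, φ)) :=
  eq_neg_of_add_eq_zero_left (by simp [clι_mul_clι_add_swap])

theorem clι_inl_mul_clι_inr_add_swap (v : strictUpper n) (φ : Module.Dual ℂ (strictUpper n)) :
    clι n (v, 0) * clι n (0, φ) + clι n (0, φ) * clι n (v, 0) = algebraMap ℂ (Cl n) (φ v) := by
  simp [clι_mul_clι_add_swap]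

open StrictUpper in
theorem clρ_eq_carQuadratic (x : Matrix (Fin n) (Fin n) ℂ) :
    clρ n x = carQuadratic (fun p => clι n (eBasis p, 0)) (fun p => clι n (0, eDual p))
      (adMatrix x) := by
  rw [carQuadratic, Fintype.sum_prod_type, Finset.sum_comm]
  refine Finset.sum_congr rfl fun p _ => ?_
  change clι n (LinearMap.inl ℂ _ _ (ad x (eBasis p))) * _ = _
  rw [← basis_apply, ← (basis n).sum_repr (ad x (basis n p)), map_sum, map_sum, Finset.sum_mul]
  simp only [map_smul, smul_mul_assoc, adMatrix, LinearMap.toMatrixAlgEquiv_apply,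
    basis_apply]
  rfl

theorem clρ_commutator {x y : Matrix (Fin n) (Fin n) ℂ} (hx : x ∈ strictUpper n)
    (hy : y ∈ strictUpper n) : clρ n x * clρ n y - clρ n y * clρ n x = clρ n (x * y - y * x) := by
  have hab (p q : DeltaP n) : clι n (eBasis p, 0) * clι n (0, eDual q) +
      clι n (0, eDual q) * clι n (eBasis p, 0) = if p = q then 1 else 0 := by
    rw [clι_inl_mul_clι_inr_add_swap, StrictUpper.eDual_eBasis]
    split_ifs <;> simp
  simp only [clρ_eq_carQuadratic]
  rw [carQuadratic_commutator (fun _ _ => clι_inl_mul_clι_inl _ _)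
    (fun _ _ => clι_inr_mul_clι_inr _ _) hab, StrictUpper.adMatrix_commutator hx hy]

end Clifford

theorem chiFn_mul_eq_zero {n : ℕ} {x y : Matrix (Fin n) (Fin n) ℂ} (hx : x ∈ strictUpper n)
    (hy : y ∈ strictUpper n) : chiFn n (x * y) = 0 := by
  rw [chiFn, Matrix.trace]
  refine Finset.sum_eq_zero fun i _ => ?_
  rw [Matrix.diag_apply, Matrix.mul_apply]
  refine Finset.sum_eq_zero fun k _ => ?_
  rw [fMat, Matrix.of_apply]
  split_ifs with hik
  · rw [one_mul, StrictUpper.mul_apply_eq_zero_of_le_succ hx hy hik.le]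
  · rw [zero_mul]

theorem chiFn_commutator {n : ℕ} {x y : Matrix (Fin n) (Fin n) ℂ} (hx : x ∈ strictUpper n)
    (hy : y ∈ strictUpper n) : chiFn n (x * y - y * x) = 0 := by
  rw [chiFn, mul_sub, Matrix.trace_sub, ← chiFn, ← chiFn, chiFn_mul_eq_zero hx hy,
    chiFn_mul_eq_zero hy hx, sub_zero]

theorem thetaChi_lie_hom_general (n : ℕ) :
    ∀ x y : Matrix (Fin n) (Fin n) ℂ,
      x ∈ strictUpper n → y ∈ strictUpper n →
      thetaChi n x * thetaChi n y - thetaChi n y * thetaChi n x =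
        thetaChi n (x * y - y * x) := by
  intro x y hx hy
  rw [thetaChi, thetaChi, thetaChi, tmul_one_add_one_tmul_commutator, sub_algebraMap_commutator,
    ← UniversalEnvelopingAlgebra.ι_commutator, clρ_commutator hx hy, chiFn_commutator hx hy,
    map_zero, sub_zero]

/-- `θ_χ` is a Lie algebra homomorphism for the commutator bracket:
`θ_χ(x)θ_χ(y) − θ_χ(y)θ_χ(x) = θ_χ([x,y])` for `x, y ∈ n`. -/
theorem thetaChi_lie_hom (n : ℕ) (hn : 1 ≤ n) :
    ∀ x y : Matrix (Fin n) (Fin n) ℂ,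
      x ∈ strictUpper n → y ∈ strictUpper n →
      thetaChi n x * thetaChi n y - thetaChi n y * thetaChi n x =
        thetaChi n (x * y - y * x) :=
  thetaChi_lie_hom_general n
end
end

section
/- Let R be a commutative ring containing ℚ (a commutative ℚ-algebra), let ∂ be a derivation of R, and let I be a differential ideal of R, i.e. an ideal with ∂I ⊆ I. Then the radical √I is also a differential ideal: ∂(√I) ⊆ √I. -/
/-! For `x = aᵐ⁺¹ (∂a)ˡ`, the Leibniz rule gives `∂a · ∂x - l x ∂²a = (m + 1) aᵐ (∂a)ˡ⁺²`,
so if `x ∈ I` and `I` is stable under `∂`, then `(m + 1) aᵐ (∂a)ˡ⁺² ∈ I`. Over `ℚ` the factor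
`m + 1` can be divided out, so each step trades one power of `a` for two powers of `∂a`;
starting from `aⁿ ∈ I`, after `n` steps `(∂a)²ⁿ ∈ I`. -/

theorem Ideal.mem_of_natCast_mul_mem {R : Type*} [CommRing R] [Algebra ℚ R] {I : Ideal R}
    {n : ℕ} (hn : n ≠ 0) {x : R} (h : (n : R) * x ∈ I) : x ∈ I := by
  have hunit : IsUnit (n : R) := by
    simpa using (Nat.cast_ne_zero.mpr hn : (n : ℚ) ≠ 0).isUnit.map (algebraMap ℚ R)
  exact (I.unit_mul_mem_iff_mem hunit).mp h

namespace Derivation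

variable {A R : Type*} [CommSemiring A] [CommRing R] [Algebra A R]

theorem natCast_succ_mul_pow_mul_pow_mem (D : Derivation A R R) {I : Ideal R}
    (hI : ∀ x ∈ I, D x ∈ I) {a : R} {m l : ℕ} (h : a ^ (m + 1) * D a ^ l ∈ I) :
    ((m + 1 : ℕ) : R) * (a ^ m * D a ^ (l + 2)) ∈ I := by
  have hleibniz : ((m + 1 : ℕ) : R) * (a ^ m * D a ^ (l + 2)) =
      D a * D (a ^ (m + 1) * D a ^ l) - l * (a ^ (m + 1) * D a ^ l) * D (D a) := by
    rw [leibniz, leibniz_pow, leibniz_pow, Nat.add_sub_cancel]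
    simp only [smul_eq_mul, nsmul_eq_mul]
    -- `leibniz_pow` produces the truncated exponent `l - 1`
    cases l <;> simp only [Nat.cast_add, Nat.cast_one, Nat.add_sub_cancel] <;> ring
  rw [hleibniz]
  exact I.sub_mem (I.mul_mem_left _ (hI _ h)) (I.mul_mem_right _ (I.mul_mem_left _ h))

theorem pow_mul_pow_mem_of_pow_add_mem [Algebra ℚ R] (D : Derivation A R R) {I : Ideal R}
    (hI : ∀ x ∈ I, D x ∈ I) {a : R} {m k l : ℕ} (h : a ^ (m + k) * D a ^ l ∈ I) :
    a ^ m * D a ^ (l + 2 * k) ∈ I := by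
  induction k generalizing m l with
  | zero => simpa using h
  | succ k ih =>
    have hstep := I.mem_of_natCast_mul_mem (Nat.succ_ne_zero _)
      (D.natCast_succ_mul_pow_mul_pow_mem hI (m := m + k) (by rwa [← add_assoc] at h))
    simpa only [mul_add, mul_one, add_assoc, add_comm 2] using ih hstep

end Derivation

/-- If `I` is a differential ideal of a commutative `ℚ`-algebra `R` with respect
to a derivation `∂` (i.e. `∂ I ⊆ I`), then the radical `√I` is also a
differential ideal: `∂(√I) ⊆ √I`. -/
theorem radical_of_differential_ideal_is_differential
    (R : Type*) [CommRing R] [Algebra ℚ R]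
    (D : Derivation ℚ R R) (I : Ideal R) (hI : ∀ a ∈ I, D a ∈ I) :
    ∀ a ∈ I.radical, D a ∈ I.radical := by
  rintro a ⟨n, hn⟩
  refine ⟨2 * n, ?_⟩
  simpa using D.pow_mul_pow_mem_of_pow_add_mem hI (m := 0) (k := n) (l := 0) (by simpa using hn)
end

section
/- Let g be a finite-dimensional semisimple Lie algebra over ℂ and let (e, h, f) be an sl₂-triple in g (so [h,e] = 2e, [h,f] = −2f, [e,f] = h, with e ≠ 0). Then g decomposes as the direct sum g = g^e ⊕ [g, f] of the centralizer of e and the image of ad f: ker(ad e) + range(ad f) = g and ker(ad e) ∩ range(ad f) = 0. (This expresses that the Slodowy slice S_f = f + g^e intersects the adjoint orbit of f transversally at f.) -/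
/-!
Write `E`, `F`, `H` for the actions of `e`, `f`, `h`. Since `⁅H, E⁆ = 2E` and `⁅H, F⁆ = -2F`, the
maps `E` and `F` shift the generalized eigenspaces of `H` by `±2`, and `ker E ⊓ range F` is
`H`-stable. If it were nonzero it would contain an `H`-eigenvector `v` killed by `E`, whose weight
is therefore some `n : ℕ`; projecting a preimage of `v` onto the generalized `(n + 2)`-eigenspace
gives `u` there with `F u = v`. For the last nonzero `w = E ^ m u`, the identity
`⁅E ^ (m + 1), F⁆ = (m + 1) • (H - m) * E ^ m` forces `H w = m w`, although `w` has generalized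
weight `n + 2 + 2m ≠ m`. The same argument for the triple `(-h, f, e)` gives
`ker F ⊓ range E = ⊥`, and rank–nullity turns the two disjointness statements into
`ker E ⊕ range F = g`.
-/

open Module

theorem iSupIndep.inf_iSup_of_le {α ι : Type*} [CompleteLattice α] [IsModularLattice α]
    {V W : ι → α} (hV : iSupIndep V) (hWV : W ≤ V) (i : ι) : V i ⊓ ⨆ j, W j = W i := by
  have hrest : V i ⊓ ⨆ (j) (_ : j ≠ i), W j = ⊥ :=
    disjoint_iff.mp <| (hV i).mono_right (iSup₂_mono fun j _ ↦ hWV j)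
  rw [iSup_split_single W i, inf_comm, sup_inf_assoc_of_le _ (hWV i), inf_comm, hrest, sup_bot_eq]

namespace Module.End

section CommRing

variable {R M : Type*} [CommRing R] [AddCommGroup M] [Module R M] {H B : End R M} {c : R}

theorem mapsTo_maxGenEigenspace_of_lie_eq_smul (hB : ⁅H, B⁆ = c • B) (μ : R) :
    Set.MapsTo B (H.maxGenEigenspace μ) (H.maxGenEigenspace (μ + c)) := by
  have hsemi : SemiconjBy B (H - μ • 1) (H - (μ + c) • 1) := by
    rw [Ring.lie_def, sub_eq_iff_eq_add] at hB
    simp only [SemiconjBy, mul_sub, sub_mul, add_mul, hB, add_smul, smul_mul_assoc,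
      mul_smul_comm, mul_one, one_mul]
    abel
  intro x hx
  obtain ⟨k, hk⟩ := (mem_maxGenEigenspace _ _ _).mp hx
  refine (mem_maxGenEigenspace _ _ _).mpr ⟨k, ?_⟩
  rw [← Module.End.mul_apply, ← (hsemi.pow_right k).eq, Module.End.mul_apply, hk, map_zero]

theorem mapsTo_pow_maxGenEigenspace_of_lie_eq_smul (hB : ⁅H, B⁆ = c • B) (k : ℕ) (μ : R) :
    Set.MapsTo (B ^ k) (H.maxGenEigenspace μ) (H.maxGenEigenspace (μ + k * c)) := by
  induction k with
  | zero => intro x hx; simpa using hx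
  | succ k ih =>
    rw [pow_succ', Module.End.coe_mul, Nat.cast_succ, add_one_mul, ← add_assoc]
    exact (mapsTo_maxGenEigenspace_of_lie_eq_smul hB _).comp ih

theorem apply_mem_ker_of_lie_eq_smul (hB : ⁅H, B⁆ = c • B) {x : M} (hx : x ∈ LinearMap.ker B) :
    H x ∈ LinearMap.ker B := by
  have := congr($hB x)
  rw [LinearMap.mem_ker] at hx ⊢
  simpa [Ring.lie_def, hx, eq_comm] using this

theorem apply_mem_range_of_lie_eq_smul (hB : ⁅H, B⁆ = c • B) {x : M}
    (hx : x ∈ LinearMap.range B) : H x ∈ LinearMap.range B := by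
  obtain ⟨y, rfl⟩ := hx
  refine ⟨H y + c • y, ?_⟩
  have := congr($hB y)
  simp only [Ring.lie_def, LinearMap.sub_apply, Module.End.mul_apply, LinearMap.smul_apply] at this
  rw [map_add, map_smul, ← this, add_sub_cancel]

end CommRing

variable {K V : Type*} [Field K] [AddCommGroup V] [Module K V] [FiniteDimensional K V]
  {H B : End K V} {c : K}

theorem exists_pow_apply_eq_zero_of_lie_eq_smul [CharZero K] (hB : ⁅H, B⁆ = c • B) (hc : c ≠ 0)
    {μ : K} {x : V} (hx : x ∈ H.maxGenEigenspace μ) : ∃ k : ℕ, (B ^ k) x = 0 := by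
  by_contra! hne
  refine Set.infinite_range_of_injective (f := fun k : ℕ ↦ μ + k * c) (fun a b hab ↦ ?_)
    ((Submodule.finite_ne_bot_of_iSupIndep H.independent_maxGenEigenspace).subset ?_)
  · simpa [hc] using hab
  · rintro _ ⟨k, rfl⟩
    exact (Submodule.ne_bot_iff _).mpr
      ⟨_, mapsTo_pow_maxGenEigenspace_of_lie_eq_smul hB k μ hx, hne k⟩

theorem maxGenEigenspace_inf_range_of_lie_eq_smul [IsAlgClosed K] (hB : ⁅H, B⁆ = c • B)
    (μ : K) : H.maxGenEigenspace μ ⊓ LinearMap.range B = (H.maxGenEigenspace (μ - c)).map B := by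
  have hle : (fun ν ↦ (H.maxGenEigenspace (ν - c)).map B) ≤ H.maxGenEigenspace := fun ν ↦ by
    refine Submodule.map_le_iff_le_comap.mpr fun x hx ↦ ?_
    simpa using mapsTo_maxGenEigenspace_of_lie_eq_smul hB (ν - c) hx
  have hsup : ⨆ ν, (H.maxGenEigenspace (ν - c)).map B = LinearMap.range B := by
    rw [LinearMap.range_eq_map, ← H.iSup_maxGenEigenspace_eq_top, Submodule.map_iSup]
    exact (Equiv.subRight c).iSup_comp (g := fun ν ↦ (H.maxGenEigenspace ν).map B)
  rw [← hsup, H.independent_maxGenEigenspace.inf_iSup_of_le hle]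

theorem exists_hasEigenvector_mem_of_apply_mem [IsAlgClosed K] {p : Submodule K V} (hp : p ≠ ⊥)
    (hHp : ∀ x ∈ p, H x ∈ p) : ∃ μ, ∃ v ∈ p, H.HasEigenvector μ v := by
  have : Nontrivial p := Submodule.nontrivial_iff_ne_bot.mpr hp
  obtain ⟨μ, hμ⟩ := exists_eigenvalue (H.restrict hHp)
  obtain ⟨v, hv⟩ := hμ.exists_hasEigenvector
  exact ⟨μ, v, v.2, eigenspace_restrict_le_eigenspace H hHp μ ⟨v, hv.1, rfl⟩,
    by simpa using hv.2⟩

end Module.End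

section Ring

variable {A : Type*} [Ring A] {H E F : A}

theorem lie_pow_succ_eq_nsmul_mul_pow (hHE : ⁅H, E⁆ = 2 • E) (hEF : ⁅E, F⁆ = H) (k : ℕ) :
    ⁅E ^ (k + 1), F⁆ = (k + 1) • ((H - k) * E ^ k) := by
  rw [Ring.lie_def] at *
  have hEH (a : ℕ) : E * (H - a) = (H - (a + 2 : ℕ)) * E := by
    rw [mul_sub, ← (Nat.cast_commute a E).eq, Nat.cast_add, Nat.cast_two, sub_mul, add_mul, two_mul,
      ← two_nsmul, ← hHE]
    noncomm_ring
  induction k with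
  | zero => simp [hEF]
  | succ k ih =>
    calc E ^ (k + 1 + 1) * F - F * E ^ (k + 1 + 1)
        = E * (E ^ (k + 1) * F - F * E ^ (k + 1)) + (E * F - F * E) * E ^ (k + 1) := by
          rw [pow_succ' E (k + 1)]; noncomm_ring
      _ = (k + 1) • ((H - (k + 2 : ℕ)) * E ^ (k + 1)) + H * E ^ (k + 1) := by
          rw [ih, hEF, mul_smul_comm, ← mul_assoc, hEH, mul_assoc, ← pow_succ']
      _ = (k + 1 + 1) • ((H - (k + 1 : ℕ)) * E ^ (k + 1)) := by
          simp only [nsmul_eq_mul]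
          push_cast
          noncomm_ring

end Ring

open LieModule LinearMap Module.End

theorem LinearMap.isCompl_ker_range_of_disjoint {K V : Type*} [Field K] [AddCommGroup V]
    [Module K V] [FiniteDimensional K V] {A B : V →ₗ[K] V} (hAB : Disjoint (ker A) (range B))
    (hBA : Disjoint (ker B) (range A)) : IsCompl (ker A) (range B) := by
  refine (Submodule.isCompl_iff_disjoint _ _ ?_).mpr hAB
  have := Submodule.finrank_add_finrank_le_of_disjoint hBA
  have := finrank_range_add_finrank_ker A
  have := finrank_range_add_finrank_ker B
  omega

theorem LieModule.toEnd_lie_eq_lie_toEnd {K L M : Type*} [CommRing K] [LieRing L] [LieAlgebra K L]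
    [AddCommGroup M] [Module K M] [LieRingModule L M] [LieModule K L M] (x y : L) :
    toEnd K L M ⁅x, y⁆ = ⁅toEnd K L M x, toEnd K L M y⁆ := by
  ext m
  simp [Ring.lie_def]

namespace IsSl2Triple

theorem of_smul {K L : Type*} [Field K] [CharZero K] [LieRing L] [LieAlgebra K L] {h e f : L}
    (he : e ≠ 0) (hhe : ⁅h, e⁆ = (2 : K) • e) (hhf : ⁅h, f⁆ = (-2 : K) • f) (hef : ⁅e, f⁆ = h) :
    IsSl2Triple h e f where
  h_ne_zero := by rintro rfl; exact he (by simpa using hhe.symm)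
  lie_e_f := hef
  lie_h_e_nsmul := by rw [hhe, two_smul, two_nsmul]
  lie_h_f_nsmul := by rw [hhf, neg_smul, two_smul, two_nsmul]

variable {K L M : Type*} [Field K] [LieRing L] [LieAlgebra K L]
  [AddCommGroup M] [Module K M] [LieRingModule L M] [LieModule K L M]
  {h e f : L}

variable (K M) in
theorem lie_toEnd_h_e (t : IsSl2Triple h e f) :
    ⁅toEnd K L M h, toEnd K L M e⁆ = (2 : K) • toEnd K L M e := by
  rw [← toEnd_lie_eq_lie_toEnd, t.lie_h_e_smul K, map_smul]

variable (K M) in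
theorem lie_toEnd_h_f (t : IsSl2Triple h e f) :
    ⁅toEnd K L M h, toEnd K L M f⁆ = (-2 : K) • toEnd K L M f := by
  rw [← toEnd_lie_eq_lie_toEnd, t.lie_lie_smul_f K, map_neg, map_smul, neg_smul]

variable (K M) in
theorem lie_toEnd_e_f (t : IsSl2Triple h e f) :
    ⁅toEnd K L M e, toEnd K L M f⁆ = toEnd K L M h := by
  rw [← toEnd_lie_eq_lie_toEnd, t.lie_e_f]

variable [CharZero K] [FiniteDimensional K M]

theorem exists_nat_eq_neg_of_lie_e_lie_f_eq_zero (t : IsSl2Triple h e f) {ν : K} {u : M}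
    (hu : u ∈ (toEnd K L M h).maxGenEigenspace ν) (hu₀ : u ≠ 0) (hefu : ⁅e, ⁅f, u⁆⁆ = 0) :
    ∃ m : ℕ, ν = -m := by
  obtain ⟨m, hm, hm₁⟩ := Nat.exists_not_and_succ_of_not_zero_of_exists (by simpa using hu₀)
    (exists_pow_apply_eq_zero_of_lie_eq_smul (t.lie_toEnd_h_e K M) two_ne_zero hu)
  have hcomm := congr($(lie_pow_succ_eq_nsmul_mul_pow
    (by rw [t.lie_toEnd_h_e K M, two_smul, two_nsmul]) (t.lie_toEnd_e_f K M) m) u)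
  have hw : toEnd K L M h ((toEnd K L M e ^ m) u) = (m : K) • (toEnd K L M e ^ m) u := by
    rw [Ring.lie_def, LinearMap.sub_apply, Module.End.mul_apply, Module.End.mul_apply, hm₁,
      map_zero, sub_zero, pow_succ, Module.End.mul_apply, toEnd_apply_apply, toEnd_apply_apply,
      hefu, map_zero, eq_comm, LinearMap.smul_apply, ← Nat.cast_smul_eq_nsmul K,
      smul_eq_zero_iff_right (Nat.cast_ne_zero.mpr m.succ_ne_zero), Module.End.mul_apply,
      LinearMap.sub_apply, sub_eq_zero] at hcomm
    rw [hcomm, Module.End.natCast_apply, Nat.cast_smul_eq_nsmul]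
  have hmem := mapsTo_pow_maxGenEigenspace_of_lie_eq_smul
    (t.lie_toEnd_h_e K M) m ν hu
  have hweight : ν + m * 2 = m := by
    by_contra hne
    exact hm <| Submodule.disjoint_def.mp (disjoint_genEigenspace _ hne ⊤ ⊤) _ hmem
      (eigenspace_le_maxGenEigenspace (mem_eigenspace_iff.mpr hw))
  exact ⟨m, by linear_combination hweight⟩

theorem disjoint_ker_toEnd_e_range_toEnd_f [IsAlgClosed K] (t : IsSl2Triple h e f) :
    Disjoint (ker (toEnd K L M e)) (range (toEnd K L M f)) := by
  have hinv : ∀ x ∈ ker (toEnd K L M e) ⊓ range (toEnd K L M f),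
      toEnd K L M h x ∈ ker (toEnd K L M e) ⊓ range (toEnd K L M f) := fun x hx ↦
    ⟨apply_mem_ker_of_lie_eq_smul (t.lie_toEnd_h_e K M) hx.1,
      apply_mem_range_of_lie_eq_smul (t.lie_toEnd_h_f K M) hx.2⟩
  rw [disjoint_iff]
  by_contra hne
  obtain ⟨μ, v, ⟨hve, hvf⟩, hv⟩ := exists_hasEigenvector_mem_of_apply_mem hne hinv
  obtain ⟨n, rfl⟩ := (⟨hv.2, hv.apply_eq_smul, hve⟩ : t.HasPrimitiveVectorWith v μ).exists_nat
  obtain ⟨u, hu, rfl⟩ : v ∈ ((toEnd K L M h).maxGenEigenspace (n - -2)).map (toEnd K L M f) := by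
    rw [← maxGenEigenspace_inf_range_of_lie_eq_smul (t.lie_toEnd_h_f K M)]
    exact ⟨eigenspace_le_maxGenEigenspace hv.1, hvf⟩
  obtain ⟨m, hm⟩ := t.exists_nat_eq_neg_of_lie_e_lie_f_eq_zero hu
    (by rintro rfl; exact hv.2 (map_zero _)) hve
  have : (n + m + 2 : K) = 0 := by linear_combination hm
  norm_cast at this

theorem isCompl_ker_toEnd_e_range_toEnd_f [IsAlgClosed K] (t : IsSl2Triple h e f) :
    IsCompl (ker (toEnd K L M e)) (range (toEnd K L M f)) :=
  isCompl_ker_range_of_disjoint t.disjoint_ker_toEnd_e_range_toEnd_f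
    t.symm.disjoint_ker_toEnd_e_range_toEnd_f

end IsSl2Triple

theorem slodowy_transversality_general
    (L : Type*) [LieRing L] [LieAlgebra ℂ L] [FiniteDimensional ℂ L]
    (e h f : L) (he : e ≠ 0)
    (h1 : ⁅h, e⁆ = (2 : ℂ) • e) (h2 : ⁅h, f⁆ = (-2 : ℂ) • f) (h3 : ⁅e, f⁆ = h) :
    (∀ x : L, ∃ y z : L, ⁅e, y⁆ = 0 ∧ x = y + ⁅f, z⁆) ∧
    (∀ y : L, ⁅e, y⁆ = 0 → (∃ z : L, y = ⁅f, z⁆) → y = 0) := by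
  have hcompl :=
    (IsSl2Triple.of_smul he h1 h2 h3).isCompl_ker_toEnd_e_range_toEnd_f (K := ℂ) (M := L)
  refine ⟨fun x ↦ ?_, fun y hy ⟨z, hz⟩ ↦ ?_⟩
  · obtain ⟨y, hy, _, ⟨z, rfl⟩, hx⟩ :=
      Submodule.mem_sup.mp (hcompl.sup_eq_top ▸ Submodule.mem_top (x := x))
    exact ⟨y, z, hy, hx.symm⟩
  · exact Submodule.disjoint_def.mp hcompl.disjoint y hy ⟨z, hz.symm⟩

/-- For an `sl₂`-triple `(e, h, f)` in a finite-dimensional semisimple complex Lie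
algebra `g`, one has the direct sum decomposition `g = g^e ⊕ [g, f]` of the
centralizer of `e` and the image of `ad f`. -/
theorem slodowy_transversality
    (L : Type*) [LieRing L] [LieAlgebra ℂ L] [FiniteDimensional ℂ L]
    [LieAlgebra.IsSemisimple ℂ L]
    (e h f : L) (he : e ≠ 0)
    (h1 : ⁅h, e⁆ = (2 : ℂ) • e) (h2 : ⁅h, f⁆ = (-2 : ℂ) • f) (h3 : ⁅e, f⁆ = h) :
    (∀ x : L, ∃ y z : L, ⁅e, y⁆ = 0 ∧ x = y + ⁅f, z⁆) ∧
    (∀ y : L, ⁅e, y⁆ = 0 → (∃ z : L, y = ⁅f, z⁆) → y = 0) :=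
  slodowy_transversality_general L e h f he h1 h2 h3
end
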